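/- Let R be a ring with sfli(R^op) ≤ n < ∞, i.e. every injective right R-module has flat dimension at most n as a right module. Then every acyclic complex of flat left R-modules is F-totally acyclic: for every exact complex F of flat left R-modules and every injective right R-module E, the complex E ⊗_R F is exact. -/

import Mathlib

noncomputable section

open LinearMap MulOpposite TensorProduct

/-- A (doubly infinite, cohomologically indexed) complex of `R`-modules. -/
structure Cx (R : Type) [Ring R] where
  X : ℤ → ModuleCat.{0} R
  d : ∀ n : ℤ, X n →ₗ[R] X (n + 1)
  dd : ∀ n : ℤ, (d (n + 1)).comp (d n) = 0

namespace Cx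

variable {R : Type} [Ring R]

/-- The complex is exact (acyclic) everywhere. -/
def Acyclic (C : Cx R) : Prop :=
  ∀ n : ℤ, LinearMap.range (C.d n) = LinearMap.ker (C.d (n + 1))

/-- Exactness of the induced complex `Hom_R(C, M)`. -/
def HomOutExact (C : Cx R) (M : ModuleCat.{0} R) : Prop :=
  ∀ (n : ℤ) (f : C.X (n + 1) →ₗ[R] M), f.comp (C.d n) = 0 →
    ∃ g : C.X (n + 1 + 1) →ₗ[R] M, g.comp (C.d (n + 1)) = f

/-- Exactness of the induced complex `Hom_R(J, C)`. -/
def HomInExact (C : Cx R) (J : ModuleCat.{0} R) : Prop :=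
  ∀ (n : ℤ) (f : J →ₗ[R] C.X (n + 1)), (C.d (n + 1)).comp f = 0 →
    ∃ g : J →ₗ[R] C.X n, (C.d n).comp g = f

end Cx

section Tensor

variable (R : Type) [Ring R]

/-- The defining relations of the tensor product `E ⊗_R M` of a right `R`-module `E`
and a left `R`-module `M`, inside `E ⊗_ℤ M`. -/
def ncRel (E : ModuleCat.{0} Rᵐᵒᵖ) (M : ModuleCat.{0} R) :
    Submodule ℤ (TensorProduct ℤ E M) :=
  Submodule.span ℤ
    {x | ∃ (r : R) (e : E) (m : M), x = (op r • e) ⊗ₜ[ℤ] m - e ⊗ₜ[ℤ] (r • m)}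

/-- The tensor product `E ⊗_R M` of a right `R`-module and a left `R`-module. -/
abbrev NCT (E : ModuleCat.{0} Rᵐᵒᵖ) (M : ModuleCat.{0} R) : Type :=
  TensorProduct ℤ E M ⧸ ncRel R E M

/-- Functoriality of `E ⊗_R -` in the left module argument. -/
def tmapR (E : ModuleCat.{0} Rᵐᵒᵖ) {M N : ModuleCat.{0} R} (f : M →ₗ[R] N) :
    NCT R E M →ₗ[ℤ] NCT R E N :=
  Submodule.mapQ _ _
    (TensorProduct.map LinearMap.id f.toAddMonoidHom.toIntLinearMap) (by
      rw [ncRel, Submodule.span_le]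
      rintro x ⟨r, e, m, rfl⟩
      simp only [SetLike.mem_coe, Submodule.mem_comap, map_sub, TensorProduct.map_tmul,
        LinearMap.id_coe, id_eq, AddMonoidHom.coe_toIntLinearMap, LinearMap.toAddMonoidHom_coe]
      show TensorProduct.map LinearMap.id f.toAddMonoidHom.toIntLinearMap _ ∈ ncRel R E N
      rw [map_sub, TensorProduct.map_tmul, TensorProduct.map_tmul]
      simp only [LinearMap.id_coe, id_eq, AddMonoidHom.coe_toIntLinearMap,
        LinearMap.toAddMonoidHom_coe]
      rw [f.map_smul]
      exact Submodule.subset_span ⟨r, e, f m, rfl⟩)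

/-- Functoriality of `- ⊗_R M` in the right module argument. -/
def tmapL {A B : ModuleCat.{0} Rᵐᵒᵖ} (g : A →ₗ[Rᵐᵒᵖ] B) (M : ModuleCat.{0} R) :
    NCT R A M →ₗ[ℤ] NCT R B M :=
  Submodule.mapQ _ _
    (TensorProduct.map g.toAddMonoidHom.toIntLinearMap LinearMap.id) (by
      rw [ncRel, Submodule.span_le]
      rintro x ⟨r, e, m, rfl⟩
      simp only [SetLike.mem_coe, Submodule.mem_comap, map_sub, TensorProduct.map_tmul,
        LinearMap.id_coe, id_eq, AddMonoidHom.coe_toIntLinearMap, LinearMap.toAddMonoidHom_coe]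
      show TensorProduct.map g.toAddMonoidHom.toIntLinearMap LinearMap.id _ ∈ ncRel R B M
      rw [map_sub, TensorProduct.map_tmul, TensorProduct.map_tmul]
      simp only [LinearMap.id_coe, id_eq, AddMonoidHom.coe_toIntLinearMap,
        LinearMap.toAddMonoidHom_coe]
      rw [g.map_smul]
      exact Submodule.subset_span ⟨r, g e, m, rfl⟩)

end Tensor

/-- Exactness of the induced complex `E ⊗_R C` for a complex `C` of left `R`-modules. -/
def Cx.TensorExact {R : Type} [Ring R] (C : Cx R) (E : ModuleCat.{0} Rᵐᵒᵖ) : Prop :=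
  ∀ n : ℤ, LinearMap.range (tmapR R E (C.d n)) = LinearMap.ker (tmapR R E (C.d (n + 1)))

section Tensor2

variable (R : Type) [Ring R]

/-- A left `R`-module `M` is flat if `- ⊗_R M` preserves injections of right modules. -/
def IsFlat (M : ModuleCat.{0} R) : Prop :=
  ∀ (A B : ModuleCat.{0} Rᵐᵒᵖ) (g : A →ₗ[Rᵐᵒᵖ] B),
    Function.Injective g → Function.Injective (tmapL R g M)

/-- A right `R`-module `E` is flat if `E ⊗_R -` preserves injections of left modules. -/
def IsFlatR (E : ModuleCat.{0} Rᵐᵒᵖ) : Prop :=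
  ∀ (M N : ModuleCat.{0} R) (f : M →ₗ[R] N),
    Function.Injective f → Function.Injective (tmapR R E f)

end Tensor2

section Dims

variable (R : Type) [Ring R]

/-- `M` has injective dimension at most `n`. -/
def InjDimLE (M : ModuleCat.{0} R) (n : ℕ) : Prop :=
  ∃ (E : ℕ → ModuleCat.{0} R) (d : ∀ i, E i →ₗ[R] E (i + 1)) (ε : M →ₗ[R] E 0),
    (∀ i, Module.Injective R (E i)) ∧ Function.Injective ε ∧
    LinearMap.range ε = LinearMap.ker (d 0) ∧
    (∀ i, LinearMap.range (d i) = LinearMap.ker (d (i + 1))) ∧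
    (∀ i, n < i → Subsingleton (E i))

/-- `M` has projective dimension at most `n`. -/
def ProjDimLE (M : ModuleCat.{0} R) (n : ℕ) : Prop :=
  ∃ (P : ℕ → ModuleCat.{0} R) (d : ∀ i, P (i + 1) →ₗ[R] P i) (ε : P 0 →ₗ[R] M),
    (∀ i, Module.Projective R (P i)) ∧ Function.Surjective ε ∧
    LinearMap.range (d 0) = LinearMap.ker ε ∧
    (∀ i, LinearMap.range (d (i + 1)) = LinearMap.ker (d i)) ∧
    (∀ i, n < i → Subsingleton (P i))

/-- The left `R`-module `M` has flat dimension at most `n`. -/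
def FlatDimLE (M : ModuleCat.{0} R) (n : ℕ) : Prop :=
  ∃ (F : ℕ → ModuleCat.{0} R) (d : ∀ i, F (i + 1) →ₗ[R] F i) (ε : F 0 →ₗ[R] M),
    (∀ i, IsFlat R (F i)) ∧ Function.Surjective ε ∧
    LinearMap.range (d 0) = LinearMap.ker ε ∧
    (∀ i, LinearMap.range (d (i + 1)) = LinearMap.ker (d i)) ∧
    (∀ i, n < i → Subsingleton (F i))

/-- The right `R`-module `E` has flat dimension at most `n` (as a right module). -/
def FlatDimRLE (E : ModuleCat.{0} Rᵐᵒᵖ) (n : ℕ) : Prop :=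
  ∃ (F : ℕ → ModuleCat.{0} Rᵐᵒᵖ) (d : ∀ i, F (i + 1) →ₗ[Rᵐᵒᵖ] F i) (ε : F 0 →ₗ[Rᵐᵒᵖ] E),
    (∀ i, IsFlatR R (F i)) ∧ Function.Surjective ε ∧
    LinearMap.range (d 0) = LinearMap.ker ε ∧
    (∀ i, LinearMap.range (d (i + 1)) = LinearMap.ker (d i)) ∧
    (∀ i, n < i → Subsingleton (F i))

end Dims

section Conditions

variable (R : Type) [Ring R]

/-- Every acyclic complex of projective left `R`-modules is totally acyclic. -/
def AllProjTotAc : Prop :=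
  ∀ C : Cx R, C.Acyclic → (∀ n, Module.Projective R (C.X n)) →
    ∀ M : ModuleCat.{0} R, Module.Projective R M → C.HomOutExact M

/-- Every acyclic complex of injective left `R`-modules is totally acyclic. -/
def AllInjTotAc : Prop :=
  ∀ C : Cx R, C.Acyclic → (∀ n, Module.Injective R (C.X n)) →
    ∀ J : ModuleCat.{0} R, Module.Injective R J → C.HomInExact J

/-- Every acyclic complex of flat left `R`-modules is F-totally acyclic. -/
def AllFlatFTotAc : Prop :=
  ∀ C : Cx R, C.Acyclic → (∀ n, IsFlat R (C.X n)) →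
    ∀ E : ModuleCat.{0} Rᵐᵒᵖ, Module.Injective Rᵐᵒᵖ E → C.TensorExact E

/-- Every acyclic complex of projective left `R`-modules is F-totally acyclic. -/
def AllProjFTotAc : Prop :=
  ∀ C : Cx R, C.Acyclic → (∀ n, Module.Projective R (C.X n)) →
    ∀ E : ModuleCat.{0} Rᵐᵒᵖ, Module.Injective Rᵐᵒᵖ E → C.TensorExact E

end Conditions

section Gorenstein

variable (R : Type) [Ring R]

/-- `M` is Gorenstein projective: a cycle of a totally acyclic complex of projectives. -/
def IsGProj (M : ModuleCat.{0} R) : Prop :=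
  ∃ (C : Cx R) (n : ℤ), C.Acyclic ∧ (∀ k, Module.Projective R (C.X k)) ∧
    (∀ Q : ModuleCat.{0} R, Module.Projective R Q → C.HomOutExact Q) ∧
    Nonempty (M ≃ₗ[R] LinearMap.ker (C.d n))

/-- `M` is Gorenstein injective: a cycle of a totally acyclic complex of injectives. -/
def IsGInj (M : ModuleCat.{0} R) : Prop :=
  ∃ (C : Cx R) (n : ℤ), C.Acyclic ∧ (∀ k, Module.Injective R (C.X k)) ∧
    (∀ J : ModuleCat.{0} R, Module.Injective R J → C.HomInExact J) ∧
    Nonempty (M ≃ₗ[R] LinearMap.ker (C.d n))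

/-- `M` is Gorenstein flat: a cycle of an F-totally acyclic complex of flats. -/
def IsGFlat (M : ModuleCat.{0} R) : Prop :=
  ∃ (C : Cx R) (n : ℤ), C.Acyclic ∧ (∀ k, IsFlat R (C.X k)) ∧
    (∀ E : ModuleCat.{0} Rᵐᵒᵖ, Module.Injective Rᵐᵒᵖ E → C.TensorExact E) ∧
    Nonempty (M ≃ₗ[R] LinearMap.ker (C.d n))

end Gorenstein

section CharM

/-- The character group `Hom_ℤ(M, ℚ/ℤ)`. -/
abbrev CharM (M : Type) [AddCommGroup M] : Type := M →+ AddCircle (1 : ℚ)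

/-- The character module of a left module is a right module. -/
instance charModuleOp (S : Type) [Ring S] (M : Type) [AddCommGroup M] [Module S M] :
    Module Sᵐᵒᵖ (CharM M) where
  smul s f := f.comp (DistribMulAction.toAddMonoidHom M s.unop)
  one_smul f := by apply AddMonoidHom.ext; intro m; show f ((1 : S) • m) = f m; rw [one_smul]
  mul_smul s t f := by
    apply AddMonoidHom.ext; intro m
    show f (((s * t).unop) • m) = f (t.unop • s.unop • m)
    rw [MulOpposite.unop_mul, mul_smul]
  smul_zero s := by apply AddMonoidHom.ext; intro m; rfl
  smul_add s f g := by apply AddMonoidHom.ext; intro m; rfl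
  add_smul s t f := by
    apply AddMonoidHom.ext; intro m
    show f (((s + t).unop) • m) = f (s.unop • m) + f (t.unop • m)
    rw [MulOpposite.unop_add, add_smul, map_add]
  zero_smul f := by
    apply AddMonoidHom.ext; intro m
    show f ((0 : S) • m) = 0
    rw [zero_smul, map_zero]

/-- The character module of a right module is a left module. -/
instance charModuleLeft (S : Type) [Ring S] (M : Type) [AddCommGroup M] [Module Sᵐᵒᵖ M] :
    Module S (CharM M) where
  smul s f := f.comp (DistribMulAction.toAddMonoidHom M (op s))
  one_smul f := by
    apply AddMonoidHom.ext; intro m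
    show f ((op (1 : S)) • m) = f m
    rw [op_one, one_smul]
  mul_smul s t f := by
    apply AddMonoidHom.ext; intro m
    show f ((op (s * t)) • m) = f (op t • op s • m)
    rw [op_mul, mul_smul]
  smul_zero s := by apply AddMonoidHom.ext; intro m; rfl
  smul_add s f g := by apply AddMonoidHom.ext; intro m; rfl
  add_smul s t f := by
    apply AddMonoidHom.ext; intro m
    show f ((op (s + t)) • m) = f (op s • m) + f (op t • m)
    rw [op_add, add_smul, map_add]
  zero_smul f := by
    apply AddMonoidHom.ext; intro m
    show f ((op (0 : S)) • m) = 0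
    rw [op_zero, zero_smul, map_zero]

end CharM

section Ext

variable (R : Type) [Ring R]

/-- `Ext^1_R(F, M) = 0`, phrased as: every extension of `F` by `M` splits. -/
def Ext1Zero (F M : ModuleCat.{0} R) : Prop :=
  ∀ (X : ModuleCat.{0} R) (i : M →ₗ[R] X) (p : X →ₗ[R] F),
    Function.Injective i → Function.Surjective p →
    LinearMap.range i = LinearMap.ker p →
    ∃ s : F →ₗ[R] X, p.comp s = LinearMap.id

/-- `Ext^k_R(M, N) = 0` (for `k ≥ 1`), phrased via vanishing of the `k`-th cohomology of
`Hom_R(P_•, N)` for every (augmented) projective resolution `⋯ → Q (i+1) → Q i → ⋯ → Q 0 ≅ M`. -/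
def ExtVanish (k : ℕ) (M N : ModuleCat.{0} R) : Prop :=
  ∀ (Q : ℕ → ModuleCat.{0} R) (g : ∀ i, Q (i + 1) →ₗ[R] Q i),
    (∀ i, Module.Projective R (Q (i + 1))) → Function.Surjective (g 0) →
    (∀ i, LinearMap.range (g (i + 1)) = LinearMap.ker (g i)) →
    Nonempty (M ≃ₗ[R] Q 0) →
    ∀ f : Q (k + 1) →ₗ[R] N, f.comp (g (k + 1)) = 0 →
      ∃ h : Q k →ₗ[R] N, h.comp (g k) = f

end Ext

/-!
Induction on the flat dimension of the injective right module `E`. A flat right module tensors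
exactly with every acyclic complex `C`: factor the differentials of `C` through its cycles and use
right exactness of `E ⊗_R -` together with flatness. In general, choose `0 → K → F → E → 0` with
`F` flat and `K` of smaller flat dimension; since the terms of `C` are flat, `K ⊗ C → F ⊗ C` is
injective, and a diagram chase transfers exactness from `K ⊗ C` and `F ⊗ C` to `E ⊗ C`.
-/

lemma LinearMap.ker_le_map_ker_of_comp_eq {S T T' Q Q' : Type*} [Ring S]
    [AddCommGroup T] [AddCommGroup T'] [AddCommGroup Q] [AddCommGroup Q']
    [Module S T] [Module S T'] [Module S Q] [Module S Q']
    {ψ : T →ₗ[S] T'} {q : T →ₗ[S] Q} {q' : T' →ₗ[S] Q'} {h : Q →ₗ[S] Q'}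
    (hcomm : h.comp q = q'.comp ψ) (hq : Function.Surjective q)
    (hrel : LinearMap.ker q' ≤ (LinearMap.ker q).map ψ) :
    LinearMap.ker h ≤ (LinearMap.ker ψ).map q := by
  intro x hx
  obtain ⟨t, rfl⟩ := hq x
  have hψt : ψ t ∈ LinearMap.ker q' := by
    rw [LinearMap.mem_ker, ← LinearMap.comp_apply, ← hcomm]
    exact hx
  obtain ⟨k, hk, hψk⟩ := hrel hψt
  refine ⟨t - k, by simp [hψk], ?_⟩
  rw [map_sub, LinearMap.mem_ker.mp hk, sub_zero]

namespace NCT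

variable {R : Type} [Ring R]

def tmul (E : ModuleCat.{0} Rᵐᵒᵖ) (M : ModuleCat.{0} R) (e : E) (m : M) : NCT R E M :=
  Submodule.Quotient.mk (e ⊗ₜ[ℤ] m)

lemma tmul_zero (E : ModuleCat.{0} Rᵐᵒᵖ) (M : ModuleCat.{0} R) (e : E) :
    tmul E M e 0 = 0 := by
  simp [tmul]

lemma zero_tmul (E : ModuleCat.{0} Rᵐᵒᵖ) (M : ModuleCat.{0} R) (m : M) :
    tmul E M 0 m = 0 := by
  simp [tmul]

@[elab_as_elim]
lemma induction_on {E : ModuleCat.{0} Rᵐᵒᵖ} {M : ModuleCat.{0} R}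
    {p : NCT R E M → Prop} (x : NCT R E M) (zero : p 0)
    (tmul : ∀ e m, p (tmul E M e m)) (add : ∀ x y, p x → p y → p (x + y)) : p x := by
  obtain ⟨y, rfl⟩ := Submodule.Quotient.mk_surjective _ x
  induction y using TensorProduct.induction_on with
  | zero => exact zero
  | tmul e m => exact tmul e m
  | add a b ha hb => exact add _ _ ha hb

lemma ext {E : ModuleCat.{0} Rᵐᵒᵖ} {M : ModuleCat.{0} R} {P : Type} [AddCommGroup P]
    {φ ψ : NCT R E M →ₗ[ℤ] P} (h : ∀ e m, φ (tmul E M e m) = ψ (tmul E M e m)) : φ = ψ :=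
  Submodule.linearMap_qext _ (TensorProduct.ext' h)

end NCT

section Functoriality

variable {R : Type} [Ring R]

@[simp]
lemma tmapR_tmul {E : ModuleCat.{0} Rᵐᵒᵖ} {M N : ModuleCat.{0} R} (f : M →ₗ[R] N)
    (e : E) (m : M) : tmapR R E f (NCT.tmul E M e m) = NCT.tmul E N e (f m) :=
  rfl

@[simp]
lemma tmapL_tmul {A B : ModuleCat.{0} Rᵐᵒᵖ} {M : ModuleCat.{0} R} (g : A →ₗ[Rᵐᵒᵖ] B)
    (e : A) (m : M) : tmapL R g M (NCT.tmul A M e m) = NCT.tmul B M (g e) m :=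
  rfl

lemma tmapR_comp {E : ModuleCat.{0} Rᵐᵒᵖ} {M N P : ModuleCat.{0} R}
    (f : M →ₗ[R] N) (g : N →ₗ[R] P) :
    tmapR R E (g.comp f) = (tmapR R E g).comp (tmapR R E f) :=
  NCT.ext fun _ _ => rfl

lemma tmapL_comp {A B C : ModuleCat.{0} Rᵐᵒᵖ} {M : ModuleCat.{0} R}
    (f : A →ₗ[Rᵐᵒᵖ] B) (g : B →ₗ[Rᵐᵒᵖ] C) :
    tmapL R (g.comp f) M = (tmapL R g M).comp (tmapL R f M) :=
  NCT.ext fun _ _ => rfl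

lemma tmapR_zero {E : ModuleCat.{0} Rᵐᵒᵖ} {M N : ModuleCat.{0} R} :
    tmapR R E (0 : M →ₗ[R] N) = 0 :=
  NCT.ext fun e _ => NCT.tmul_zero _ _ e

lemma tmapL_zero {A B : ModuleCat.{0} Rᵐᵒᵖ} {M : ModuleCat.{0} R} :
    tmapL R (0 : A →ₗ[Rᵐᵒᵖ] B) M = 0 :=
  NCT.ext fun _ m => NCT.zero_tmul _ _ m

lemma tmapR_tmapL {A B : ModuleCat.{0} Rᵐᵒᵖ} {M N : ModuleCat.{0} R}
    (g : A →ₗ[Rᵐᵒᵖ] B) (f : M →ₗ[R] N) (x : NCT R A M) :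
    tmapR R B f (tmapL R g M x) = tmapL R g N (tmapR R A f x) :=
  LinearMap.congr_fun (NCT.ext (φ := (tmapR R B f).comp (tmapL R g M))
    (ψ := (tmapL R g N).comp (tmapR R A f)) fun _ _ => rfl) x

lemma tmapR_surjective (E : ModuleCat.{0} Rᵐᵒᵖ) {M N : ModuleCat.{0} R}
    {f : M →ₗ[R] N} (hf : Function.Surjective f) : Function.Surjective (tmapR R E f) := by
  intro x
  induction x using NCT.induction_on with
  | zero => exact ⟨0, map_zero _⟩
  | tmul e m =>
    obtain ⟨m, rfl⟩ := hf m
    exact ⟨_, tmapR_tmul f e m⟩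
  | add x y hx hy =>
    obtain ⟨a, rfl⟩ := hx
    obtain ⟨b, rfl⟩ := hy
    exact ⟨a + b, map_add _ _ _⟩

lemma tmapL_surjective {A B : ModuleCat.{0} Rᵐᵒᵖ} {g : A →ₗ[Rᵐᵒᵖ] B}
    (hg : Function.Surjective g) (M : ModuleCat.{0} R) : Function.Surjective (tmapL R g M) := by
  intro x
  induction x using NCT.induction_on with
  | zero => exact ⟨0, map_zero _⟩
  | tmul e m =>
    obtain ⟨e, rfl⟩ := hg e
    exact ⟨_, tmapL_tmul g e m⟩
  | add x y hx hy =>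
    obtain ⟨a, rfl⟩ := hx
    obtain ⟨b, rfl⟩ := hy
    exact ⟨a + b, map_add _ _ _⟩

end Functoriality

section RightExactness

variable {R : Type} [Ring R]

/- Right exactness of both tensor functors is inherited from `⊗_ℤ`: each balanced relation
`e r ⊗ g b - e ⊗ r (g b)` of `E ⊗_R C` is the image of the relation `e r ⊗ b - e ⊗ r b` of
`E ⊗_R B`, so the kernel of `E ⊗_R g` is the image of the kernel of `E ⊗_ℤ g`. -/

lemma range_tmapR_eq_ker (E : ModuleCat.{0} Rᵐᵒᵖ) {A B C : ModuleCat.{0} R}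
    {f : A →ₗ[R] B} {g : B →ₗ[R] C} (hg : Function.Surjective g)
    (hfg : LinearMap.range f = LinearMap.ker g) :
    LinearMap.range (tmapR R E f) = LinearMap.ker (tmapR R E g) := by
  have hgf : g.comp f = 0 := LinearMap.range_le_ker_iff.mp hfg.le
  refine le_antisymm (LinearMap.range_le_ker_iff.mpr (by rw [← tmapR_comp, hgf, tmapR_zero])) ?_
  let gz := g.toAddMonoidHom.toIntLinearMap
  have hrel : ncRel R E C ≤ (ncRel R E B).map (LinearMap.lTensor E gz) := by
    refine Submodule.span_le.mpr ?_
    rintro _ ⟨r, e, c, rfl⟩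
    obtain ⟨b, rfl⟩ := hg c
    refine ⟨(op r • e) ⊗ₜ[ℤ] b - e ⊗ₜ[ℤ] (r • b), Submodule.subset_span ⟨r, e, b, rfl⟩, ?_⟩
    simp [gz]
  have hker := (ncRel R E B).mkQ.ker_le_map_ker_of_comp_eq (ψ := LinearMap.lTensor E gz)
    (h := tmapR R E g) (Submodule.mapQ_mkQ _ _ _) (Submodule.mkQ_surjective _)
    ((Submodule.ker_mkQ _).le.trans (hrel.trans (Submodule.map_mono (Submodule.ker_mkQ _).ge)))
  have hexact : Function.Exact ((LinearMap.ker g).subtype.toAddMonoidHom.toIntLinearMap) gz :=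
    LinearMap.exact_subtype_ker_map g
  refine hker.trans (Submodule.map_le_iff_le_comap.mpr ?_)
  rw [(lTensor_exact E hexact hg).linearMap_ker_eq]
  rintro _ ⟨y, rfl⟩
  induction y using TensorProduct.induction_on with
  | zero => simp
  | tmul e k =>
    obtain ⟨a, ha⟩ := hfg.ge k.2
    exact ⟨NCT.tmul E A e a, by rw [tmapR_tmul, ha]; rfl⟩
  | add x y hx hy => rw [map_add]; exact Submodule.add_mem _ hx hy

lemma range_tmapL_eq_ker {A B C : ModuleCat.{0} Rᵐᵒᵖ}
    {f : A →ₗ[Rᵐᵒᵖ] B} {g : B →ₗ[Rᵐᵒᵖ] C} (hg : Function.Surjective g)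
    (hfg : LinearMap.range f = LinearMap.ker g) (M : ModuleCat.{0} R) :
    LinearMap.range (tmapL R f M) = LinearMap.ker (tmapL R g M) := by
  have hgf : g.comp f = 0 := LinearMap.range_le_ker_iff.mp hfg.le
  refine le_antisymm (LinearMap.range_le_ker_iff.mpr (by rw [← tmapL_comp, hgf, tmapL_zero])) ?_
  let gz := g.toAddMonoidHom.toIntLinearMap
  have hrel : ncRel R C M ≤ (ncRel R B M).map (LinearMap.rTensor M gz) := by
    refine Submodule.span_le.mpr ?_
    rintro _ ⟨r, c, m, rfl⟩
    obtain ⟨b, rfl⟩ := hg c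
    refine ⟨(op r • b) ⊗ₜ[ℤ] m - b ⊗ₜ[ℤ] (r • m), Submodule.subset_span ⟨r, b, m, rfl⟩, ?_⟩
    simp [gz]
  have hker := (ncRel R B M).mkQ.ker_le_map_ker_of_comp_eq (ψ := LinearMap.rTensor M gz)
    (h := tmapL R g M) (Submodule.mapQ_mkQ _ _ _) (Submodule.mkQ_surjective _)
    ((Submodule.ker_mkQ _).le.trans (hrel.trans (Submodule.map_mono (Submodule.ker_mkQ _).ge)))
  have hexact : Function.Exact ((LinearMap.ker g).subtype.toAddMonoidHom.toIntLinearMap) gz :=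
    LinearMap.exact_subtype_ker_map g
  refine hker.trans (Submodule.map_le_iff_le_comap.mpr ?_)
  rw [(rTensor_exact M hexact hg).linearMap_ker_eq]
  rintro _ ⟨y, rfl⟩
  induction y using TensorProduct.induction_on with
  | zero => simp
  | tmul k m =>
    obtain ⟨a, ha⟩ := hfg.ge k.2
    exact ⟨NCT.tmul A M a m, by rw [tmapL_tmul, ha]; rfl⟩
  | add x y hx hy => rw [map_add]; exact Submodule.add_mem _ hx hy

end RightExactness

namespace Cx

variable {R : Type} [Ring R]

def cycles (C : Cx R) (k : ℤ) : ModuleCat.{0} R := ModuleCat.of R (LinearMap.ker (C.d k))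

def toCycles (C : Cx R) (k : ℤ) : C.X k →ₗ[R] C.cycles (k + 1) :=
  LinearMap.codRestrict _ (C.d k) fun x => by
    rw [LinearMap.mem_ker, ← LinearMap.comp_apply, C.dd k, LinearMap.zero_apply]

def iCycles (C : Cx R) (k : ℤ) : C.cycles k →ₗ[R] C.X k := (LinearMap.ker (C.d k)).subtype

lemma iCycles_injective (C : Cx R) (k : ℤ) : Function.Injective (C.iCycles k) :=
  Submodule.injective_subtype _

lemma range_iCycles (C : Cx R) (k : ℤ) :
    LinearMap.range (C.iCycles k) = LinearMap.ker (C.toCycles k) :=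
  (Submodule.range_subtype _).trans (LinearMap.ker_codRestrict _ _ _).symm

lemma d_eq_iCycles_comp_toCycles (C : Cx R) (k : ℤ) :
    C.d k = (C.iCycles (k + 1)).comp (C.toCycles k) :=
  rfl

lemma toCycles_surjective {C : Cx R} (hC : C.Acyclic) (k : ℤ) :
    Function.Surjective (C.toCycles k) := by
  rintro ⟨z, hz⟩
  obtain ⟨x, rfl⟩ := (hC k).ge hz
  exact ⟨x, rfl⟩

lemma tmapR_d_d (C : Cx R) (E : ModuleCat.{0} Rᵐᵒᵖ) (k : ℤ) (x : NCT R E (C.X k)) :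
    tmapR R E (C.d (k + 1)) (tmapR R E (C.d k) x) = 0 := by
  rw [← LinearMap.comp_apply, ← tmapR_comp, C.dd k, tmapR_zero, LinearMap.zero_apply]

lemma TensorExact.of_isFlatR {E : ModuleCat.{0} Rᵐᵒᵖ} (hE : IsFlatR R E) {C : Cx R}
    (hC : C.Acyclic) : C.TensorExact E := by
  intro n
  have hι : Function.Injective (tmapR R E (C.iCycles (n + 1 + 1))) :=
    hE _ _ _ (C.iCycles_injective _)
  calc LinearMap.range (tmapR R E (C.d n))
      = LinearMap.range (tmapR R E (C.iCycles (n + 1))) := by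
        rw [d_eq_iCycles_comp_toCycles, tmapR_comp, LinearMap.range_comp_of_range_eq_top]
        exact LinearMap.range_eq_top.mpr (tmapR_surjective E (toCycles_surjective hC n))
    _ = LinearMap.ker (tmapR R E (C.toCycles (n + 1))) :=
        range_tmapR_eq_ker E (toCycles_surjective hC (n + 1))
          (C.range_iCycles _)
    _ = LinearMap.ker (tmapR R E (C.d (n + 1))) := by
        rw [d_eq_iCycles_comp_toCycles C (n + 1), tmapR_comp, LinearMap.ker_comp,
          LinearMap.ker_eq_bot.mpr hι, Submodule.comap_bot]

lemma tensorExact_of_subsingleton (C : Cx R) (E : ModuleCat.{0} Rᵐᵒᵖ) [Subsingleton E] :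
    C.TensorExact E := by
  have hzero : ∀ (M : ModuleCat.{0} R) (x : NCT R E M), x = 0 := by
    intro M x
    induction x using NCT.induction_on with
    | zero => rfl
    | tmul e m => rw [Subsingleton.elim e 0, NCT.zero_tmul]
    | add x y hx hy => rw [hx, hy, add_zero]
  intro n
  ext x
  simp [hzero _ x]

/- A diagram chase in the double complex `(K → F → E) ⊗ C`, whose rows are exact by right
exactness and whose left map `i ⊗ C` is injective because `C` consists of flat modules. -/
lemma TensorExact.of_shortExact {K F E : ModuleCat.{0} Rᵐᵒᵖ} {i : K →ₗ[Rᵐᵒᵖ] F}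
    {p : F →ₗ[Rᵐᵒᵖ] E} (hi : Function.Injective i) (hp : Function.Surjective p)
    (hip : LinearMap.range i = LinearMap.ker p) {C : Cx R} (hC : ∀ k, IsFlat R (C.X k))
    (hK : C.TensorExact K) (hF : C.TensorExact F) : C.TensorExact E := by
  intro n
  refine le_antisymm (fun _ ⟨x, hx⟩ => hx ▸ C.tmapR_d_d E n x) fun z hz => ?_
  have hpi : ∀ M : ModuleCat.{0} R, (tmapL R p M).comp (tmapL R i M) = 0 := fun M => by
    rw [← tmapL_comp, LinearMap.range_le_ker_iff.mp hip.le, tmapL_zero]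
  obtain ⟨y, rfl⟩ := tmapL_surjective hp _ z
  have hdy : tmapR R F (C.d (n + 1)) y ∈ LinearMap.ker (tmapL R p (C.X (n + 1 + 1))) := by
    rw [LinearMap.mem_ker, ← tmapR_tmapL]
    exact hz
  obtain ⟨w, hw⟩ := (range_tmapL_eq_ker hp hip _).ge hdy
  have hdw : tmapR R K (C.d (n + 1 + 1)) w = 0 := by
    refine hC _ K F i hi ?_
    rw [← tmapR_tmapL, hw, C.tmapR_d_d, map_zero]
  obtain ⟨w', hw'⟩ := (hK (n + 1)).ge hdw
  have hdy' : y - tmapL R i _ w' ∈ LinearMap.ker (tmapR R F (C.d (n + 1))) := by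
    rw [LinearMap.mem_ker, map_sub, tmapR_tmapL, hw', hw, sub_self]
  obtain ⟨u, hu⟩ := (hF n).ge hdy'
  refine ⟨tmapL R p _ u, ?_⟩
  rw [tmapR_tmapL, hu, map_sub, ← LinearMap.comp_apply _ (tmapL R i _), hpi,
    LinearMap.zero_apply, sub_zero]

lemma TensorExact.of_surjective_of_isFlatR {F E : ModuleCat.{0} Rᵐᵒᵖ} {ε : F →ₗ[Rᵐᵒᵖ] E}
    (hε : Function.Surjective ε) (hF : IsFlatR R F) {C : Cx R} (hC : C.Acyclic)
    (hflat : ∀ k, IsFlat R (C.X k)) (hK : C.TensorExact (ModuleCat.of Rᵐᵒᵖ (LinearMap.ker ε))) :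
    C.TensorExact E :=
  .of_shortExact (Submodule.injective_subtype _) hε (Submodule.range_subtype _) hflat hK
    (.of_isFlatR hF hC)

lemma TensorExact.of_flatDimRLE {C : Cx R} (hC : C.Acyclic) (hflat : ∀ k, IsFlat R (C.X k))
    {n : ℕ} {E : ModuleCat.{0} Rᵐᵒᵖ} (hE : FlatDimRLE R E n) : C.TensorExact E := by
  induction n generalizing E with
  | zero =>
    obtain ⟨F, d, ε, hF, hε, hd₀, -, hvanish⟩ := hE
    have : Subsingleton (F 1) := hvanish 1 one_pos
    have : Subsingleton (LinearMap.ker ε) := by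
      rw [Submodule.subsingleton_iff_eq_bot, ← hd₀, LinearMap.range_eq_bot]
      exact Subsingleton.elim _ _
    exact .of_surjective_of_isFlatR hε (hF 0) hC hflat (C.tensorExact_of_subsingleton _)
  | succ n ih =>
    obtain ⟨F, d, ε, hF, hε, hd₀, hd, hvanish⟩ := hE
    refine .of_surjective_of_isFlatR hε (hF 0) hC hflat (ih ?_)
    refine ⟨fun i => F (i + 1), fun i => d (i + 1),
      LinearMap.codRestrict _ (d 0) fun x => hd₀ ▸ LinearMap.mem_range_self _ x,
      fun i => hF (i + 1), ?_, ?_, fun i => hd (i + 1), fun i hi => hvanish (i + 1) (by omega)⟩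
    · rintro ⟨x, hx⟩
      obtain ⟨y, rfl⟩ := hd₀.ge hx
      exact ⟨y, rfl⟩
    · rw [LinearMap.ker_codRestrict]
      exact hd 0

end Cx

/-- if every injective right `R`-module has flat dimension at most `n`
(`sfli Rᵒᵖ ≤ n`), then every acyclic complex of flat left `R`-modules is F-totally acyclic. -/
theorem stmt3 (R : Type) [Ring R] (n : ℕ)
    (h : ∀ E : ModuleCat.{0} Rᵐᵒᵖ, Module.Injective Rᵐᵒᵖ E → FlatDimRLE R E n) :
    AllFlatFTotAc R :=
  fun _ hC hflat E hE => Cx.TensorExact.of_flatDimRLE hC hflat (h E hE)
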